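/- Under the stated hypotheses, the correction terms Λ_m satisfy Λ_m(t) ≥ 0 for all t ≥ T and all m, and for every m ≥ 1 and t ≥ T, |Λ_{m+1}(t) − Λ_m(t)| ≤ (t + m) / ∏_{j=1}^{m} Φ(t+j). -/

import Mathlib

open Filter

/-- The correction terms `Λ_m` built from `A` (the inverse of `g`) and the
auxiliary function `Φ`: `Λ_0 = 0` and `Λ_{m+1}(t) = A(Φ(t+1) + Λ_m(t+1)) − Φ(t)`. -/
noncomputable def LamSeq (A Φ : ℝ → ℝ) : ℕ → ℝ → ℝ
  | 0 => fun _ => 0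
  | m + 1 => fun t => A (Φ (t + 1) + LamSeq A Φ m (t + 1)) - Φ t

/-
Since `g(Φ t) ≤ eᵗ g(Φ t) = Φ(t+1)` and `A` is increasing, `Φ t ≤ A(Φ(t+1))`, which gives
`Λ_m ≥ 0` by induction on `m`. The derivative bound `0 < A' ≤ 1/s` makes `A` `1/c`-Lipschitz on
`[c, ∞)`, and `Λ_{m+2}(t) − Λ_{m+1}(t) = A(Φ(t+1) + Λ_{m+1}(t+1)) − A(Φ(t+1) + Λ_m(t+1))` with both
arguments `≥ Φ(t+1)`, so each step in `m` divides the difference by `Φ(t+1)` while shifting `t`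
by one. Iterating down to `Λ_1(t) − Λ_0(t) = Λ_1(t) ≤ t`, where the last bound is
`A(eᵗ g(Φ t)) ≤ A(g(Φ t + t)) = Φ t + t`, gives the claim.
-/

open Set

theorem Finset.prod_Icc_one_succ {M : Type*} [CommMonoid M] (f : ℕ → M) (m : ℕ) :
    ∏ j ∈ Finset.Icc 1 (m + 1), f j = f 1 * ∏ j ∈ Finset.Icc 1 m, f (j + 1) := by
  induction m with
  | zero => simp
  | succ m ih =>
    rw [Finset.prod_Icc_succ_top (by omega), ih, Finset.prod_Icc_succ_top (by omega), mul_assoc]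

theorem abs_sub_le_div_of_abs_deriv_le_inv {A : ℝ → ℝ} {c x y : ℝ} (hc : 0 < c)
    (hdiff : ∀ s, c ≤ s → DifferentiableAt ℝ A s) (hderiv : ∀ s, c ≤ s → |deriv A s| ≤ 1 / s)
    (hx : c ≤ x) (hy : c ≤ y) : |A x - A y| ≤ |x - y| / c := by
  have hbound : ∀ s ∈ Ici c, ‖deriv A s‖ ≤ 1 / c := fun s hs =>
    (hderiv s hs).trans (one_div_le_one_div_of_le hc hs)
  have := (convex_Ici c).norm_image_sub_le_of_norm_deriv_le hdiff hbound hy hx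
  rw [Real.norm_eq_abs, Real.norm_eq_abs] at this
  rwa [one_div_mul_eq_div] at this

section LamSeq

variable {γ T : ℝ} {A Φ : ℝ → ℝ}

theorem LamSeq_zero (t : ℝ) : LamSeq A Φ 0 t = 0 := rfl

theorem LamSeq_succ (m : ℕ) (t : ℝ) :
    LamSeq A Φ (m + 1) t = A (Φ (t + 1) + LamSeq A Φ m (t + 1)) - Φ t := rfl

theorem LamSeq_succ_sub_succ (m n : ℕ) (t : ℝ) :
    LamSeq A Φ (m + 1) t - LamSeq A Φ (n + 1) t
      = A (Φ (t + 1) + LamSeq A Φ m (t + 1)) - A (Φ (t + 1) + LamSeq A Φ n (t + 1)) := by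
  simp only [LamSeq_succ]
  ring

theorem LamSeq_nonneg (hA : MonotoneOn A (Ioi γ)) (hΦγ : ∀ t, T ≤ t → γ < Φ (t + 1))
    (hΦA : ∀ t, T ≤ t → Φ t ≤ A (Φ (t + 1))) (m : ℕ) :
    ∀ t, T ≤ t → 0 ≤ LamSeq A Φ m t := by
  induction m with
  | zero => exact fun t _ => le_rfl
  | succ m ih =>
    intro t ht
    have hle : Φ (t + 1) ≤ Φ (t + 1) + LamSeq A Φ m (t + 1) :=
      le_add_of_nonneg_right (ih _ (by linarith))
    have := hA (hΦγ t ht) ((hΦγ t ht).trans_le hle) hle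
    rw [LamSeq_succ]
    linarith [hΦA t ht]

theorem abs_LamSeq_succ_sub_le
    (hA : ∀ c x y, γ < c → c ≤ x → c ≤ y → |A x - A y| ≤ |x - y| / c)
    (hΦγ : ∀ t, T ≤ t → γ < Φ (t + 1)) (hnonneg : ∀ m t, T ≤ t → 0 ≤ LamSeq A Φ m t)
    (m : ℕ) {t : ℝ} (ht : T ≤ t) :
    |LamSeq A Φ (m + 2) t - LamSeq A Φ (m + 1) t|
      ≤ |LamSeq A Φ (m + 1) (t + 1) - LamSeq A Φ m (t + 1)| / Φ (t + 1) := by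
  have ht1 : T ≤ t + 1 := by linarith
  have h := hA (Φ (t + 1)) _ _ (hΦγ t ht) (le_add_of_nonneg_right (hnonneg (m + 1) _ ht1))
    (le_add_of_nonneg_right (hnonneg m _ ht1))
  rwa [LamSeq_succ_sub_succ, ← add_sub_add_left_eq_sub (LamSeq A Φ (m + 1) (t + 1)) _ (Φ (t + 1))]

theorem abs_LamSeq_succ_sub_le_div_prod
    (hA : ∀ c x y, γ < c → c ≤ x → c ≤ y → |A x - A y| ≤ |x - y| / c)
    (hΦγ : ∀ t, T ≤ t → γ < Φ (t + 1)) (hΦpos : ∀ t, T ≤ t → 0 < Φ t)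
    (hnonneg : ∀ m t, T ≤ t → 0 ≤ LamSeq A Φ m t) (hone : ∀ t, T ≤ t → LamSeq A Φ 1 t ≤ t)
    (m : ℕ) (hm : 1 ≤ m) :
    ∀ t, T ≤ t → |LamSeq A Φ (m + 1) t - LamSeq A Φ m t|
      ≤ (t + m) / ∏ j ∈ Finset.Icc 1 m, Φ (t + j) := by
  induction m, hm using Nat.le_induction with
  | base =>
    intro t ht
    have ht1 : T ≤ t + 1 := by linarith
    have hstep := abs_LamSeq_succ_sub_le hA hΦγ hnonneg 0 ht
    rw [LamSeq_zero, sub_zero, abs_of_nonneg (hnonneg 1 _ ht1)] at hstep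
    have := div_le_div_of_nonneg_right (hone _ ht1) (hΦpos _ ht1).le
    simpa using hstep.trans this
  | succ m hm ih =>
    intro t ht
    have ht1 : T ≤ t + 1 := by linarith
    have hprod : 0 < ∏ j ∈ Finset.Icc 1 m, Φ (t + 1 + j) :=
      Finset.prod_pos fun j hj => hΦpos _ (by
        have : (1 : ℝ) ≤ j := by exact_mod_cast (Finset.mem_Icc.mp hj).1
        linarith)
    calc |LamSeq A Φ (m + 1 + 1) t - LamSeq A Φ (m + 1) t|
        ≤ |LamSeq A Φ (m + 1) (t + 1) - LamSeq A Φ m (t + 1)| / Φ (t + 1) :=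
          abs_LamSeq_succ_sub_le hA hΦγ hnonneg m ht
      _ ≤ (t + 1 + m) / (∏ j ∈ Finset.Icc 1 m, Φ (t + 1 + j)) / Φ (t + 1) := by
          gcongr
          · exact (hΦpos _ ht1).le
          · exact ih _ ht1
      _ = (t + ↑(m + 1)) / ∏ j ∈ Finset.Icc 1 (m + 1), Φ (t + j) := by
          rw [Finset.prod_Icc_one_succ, div_div, mul_comm]
          push_cast
          simp only [add_assoc, add_comm (1 : ℝ)]

end LamSeq

theorem LamSeq_nonneg_and_difference_bound_general
    (γ : ℝ) (hγ : 0 ≤ γ)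
    (g : ℝ → ℝ) (hg_mono : StrictMono g)
    (hg_range : Set.range g = Set.Ioi γ)
    (hg_grow : ∀ x u : ℝ, 0 ≤ u → Real.exp u * g x ≤ g (x + u))
    (A : ℝ → ℝ)
    (hA_left : ∀ x : ℝ, A (g x) = x)
    (hA_right : ∀ s : ℝ, γ < s → g (A s) = s)
    (hA_diff : ∀ s : ℝ, γ < s → DifferentiableAt ℝ A s)
    (hA_deriv : ∀ s : ℝ, γ < s → 0 < deriv A s ∧ deriv A s ≤ 1 / s)
    (T : ℝ) (hT : 0 < T)
    (Φ : ℝ → ℝ)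
    (hΦeq : ∀ t : ℝ, T ≤ t → Φ (t + 1) = Real.exp t * g (Φ t))
    (hΦ1 : ∀ t : ℝ, T ≤ t → 1 < Φ t) :
    (∀ m : ℕ, ∀ t : ℝ, T ≤ t → 0 ≤ LamSeq A Φ m t) ∧
    (∀ m : ℕ, 1 ≤ m → ∀ t : ℝ, T ≤ t →
      |LamSeq A Φ (m + 1) t - LamSeq A Φ m t|
        ≤ (t + m) / ∏ j ∈ Finset.Icc 1 m, Φ (t + j)) := by
  have hgγ : ∀ x, γ < g x := fun x => hg_range.subset (mem_range_self x)
  have hA_mono : MonotoneOn A (Ioi γ) := Function.monotoneOn_of_rightInvOn_of_mapsTo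
    (hg_mono.monotone.monotoneOn univ) hA_right (mapsTo_univ A _)
  have hgΦ : ∀ t, T ≤ t → g (Φ t) ≤ Φ (t + 1) := fun t ht => by
    rw [hΦeq t ht]
    exact le_mul_of_one_le_left (hγ.trans (hgγ _).le) (Real.one_le_exp (by linarith))
  have hΦγ : ∀ t, T ≤ t → γ < Φ (t + 1) := fun t ht => (hgγ _).trans_le (hgΦ t ht)
  have hΦA : ∀ t, T ≤ t → Φ t ≤ A (Φ (t + 1)) := fun t ht => by
    simpa only [hA_left] using hA_mono (hgγ _) (hΦγ t ht) (hgΦ t ht)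
  have hone : ∀ t, T ≤ t → LamSeq A Φ 1 t ≤ t := fun t ht => by
    have hgrow : Φ (t + 1) ≤ g (Φ t + t) := hΦeq t ht ▸ hg_grow _ _ (by linarith)
    have := hA_mono (hΦγ t ht) (hgγ _) hgrow
    rw [hA_left] at this
    rw [LamSeq_succ, LamSeq_zero, add_zero]
    linarith
  have hA_lip : ∀ c x y, γ < c → c ≤ x → c ≤ y → |A x - A y| ≤ |x - y| / c :=
    fun c x y hc hx hy => abs_sub_le_div_of_abs_deriv_le_inv (hγ.trans_lt hc)
      (fun s hs => hA_diff s (hc.trans_le hs))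
      (fun s hs => by
        obtain ⟨hpos, hle⟩ := hA_deriv s (hc.trans_le hs)
        rwa [abs_of_pos hpos]) hx hy
  have hnonneg := LamSeq_nonneg hA_mono hΦγ hΦA
  exact ⟨hnonneg, abs_LamSeq_succ_sub_le_div_prod hA_lip hΦγ
    (fun t ht => zero_lt_one.trans (hΦ1 t ht)) hnonneg hone⟩

theorem LamSeq_nonneg_and_difference_bound
    (γ : ℝ) (hγ : 0 ≤ γ)
    (g : ℝ → ℝ) (hg_mono : StrictMono g) (hg_diff : Differentiable ℝ g)
    (hg_range : Set.range g = Set.Ioi γ)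
    (hg_grow : ∀ x u : ℝ, 0 ≤ u → Real.exp u * g x ≤ g (x + u))
    (A : ℝ → ℝ)
    (hA_left : ∀ x : ℝ, A (g x) = x)
    (hA_right : ∀ s : ℝ, γ < s → g (A s) = s)
    (hA_diff : ∀ s : ℝ, γ < s → DifferentiableAt ℝ A s)
    (hA_deriv : ∀ s : ℝ, γ < s → 0 < deriv A s ∧ deriv A s ≤ 1 / s)
    (T : ℝ) (hT : 0 < T)
    (Φ : ℝ → ℝ)
    (hΦeq : ∀ t : ℝ, T ≤ t → Φ (t + 1) = Real.exp t * g (Φ t))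
    (hΦ1 : ∀ t : ℝ, T ≤ t → 1 < Φ t) :
    (∀ m : ℕ, ∀ t : ℝ, T ≤ t → 0 ≤ LamSeq A Φ m t) ∧
    (∀ m : ℕ, 1 ≤ m → ∀ t : ℝ, T ≤ t →
      |LamSeq A Φ (m + 1) t - LamSeq A Φ m t|
        ≤ (t + m) / ∏ j ∈ Finset.Icc 1 m, Φ (t + j)) :=
  LamSeq_nonneg_and_difference_bound_general γ hγ g hg_mono hg_range hg_grow A hA_left hA_right
    hA_diff hA_deriv T hT Φ hΦeq hΦ1
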